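/- Let α, β, γ, δ ∈ (0, π) be elliptic with M = (sin α sin β sin γ sin δ)/(sin ᾱ sin β̄ sin γ̄ sin δ̄) > 0, and let r = (sin α sin δ)/(sin ᾱ sin δ̄). Then r > 0 and (r − 1)(r − M) > 0; that is, r ∈ (0, min(1,M)) ∪ (max(1,M), ∞). -/

import Mathlib

open Real

def Elliptic (α β γ δ : ℝ) : Prop :=
  ∀ e₁ e₂ e₃ : ℝ, (e₁ = 1 ∨ e₁ = -1) → (e₂ = 1 ∨ e₂ = -1) → (e₃ = 1 ∨ e₃ = -1) →
    ∀ n : ℤ, α + e₁ * β + e₂ * γ + e₃ * δ ≠ 2 * Real.pi * n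

/-!
Write `P = sin α sin δ`, `Q = sin ᾱ sin δ̄`, `R = sin β sin γ`, `S = sin β̄ sin γ̄`, so that
`r = P / Q` and `M = P R / (Q S)`. Product-to-sum gives `P - Q = sin σ · sin ((α - β - γ + δ) / 2)`
and, symmetrically, `R - S = Q - P`, i.e. `P + R = Q + S`. As `P, R > 0` and `M > 0` force
`Q S > 0`, the relation `Q + S = P + R > 0` makes `Q` and `S` positive. Ellipticity gives `P ≠ Q`,
and then `(r - 1)(r - M) = P (P - Q)² / (Q² S) > 0`.
-/

theorem Elliptic.sin_ne_zero {α β γ δ e₁ e₂ e₃ x : ℝ} (h : Elliptic α β γ δ)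
    (he₁ : e₁ = 1 ∨ e₁ = -1) (he₂ : e₂ = 1 ∨ e₂ = -1) (he₃ : e₃ = 1 ∨ e₃ = -1)
    (hx : 2 * x = α + e₁ * β + e₂ * γ + e₃ * δ) : sin x ≠ 0 := by
  intro hsin
  obtain ⟨n, hn⟩ := sin_eq_zero_iff.mp hsin
  exact h e₁ e₂ e₃ he₁ he₂ he₃ n (by rw [← hx, ← hn]; ring)

theorem sin_mul_sin_sub_sin_mul_sin {α β γ δ σ : ℝ} (hσ : σ = (α + β + γ + δ) / 2) :
    sin α * sin δ - sin (σ - α) * sin (σ - δ) = sin σ * sin ((α - β - γ + δ) / 2) := by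
  have hP := two_mul_sin_mul_sin α δ
  have hQ := two_mul_sin_mul_sin (σ - δ) (σ - α)
  have hcos := cos_sub_cos (β + γ) (α + δ)
  rw [show σ - δ - (σ - α) = α - δ by ring, show σ - δ + (σ - α) = β + γ by rw [hσ]; ring] at hQ
  rw [show (β + γ + (α + δ)) / 2 = σ by rw [hσ]; ring,
    show (β + γ - (α + δ)) / 2 = -((α - β - γ + δ) / 2) by ring, sin_neg] at hcos
  linear_combination hP / 2 - hQ / 2 + hcos / 2

theorem pos_and_pos_of_add_pos_of_mul_pos {K : Type*} [Field K] [LinearOrder K]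
    [IsStrictOrderedRing K] {a b : K} (hsum : 0 < a + b) (hprod : 0 < a * b) :
    0 < a ∧ 0 < b := by
  rcases mul_pos_iff.mp hprod with hpos | ⟨ha, hb⟩
  · exact hpos
  · linarith

theorem div_sub_one_mul_div_sub_div_pos {K : Type*} [Field K] [LinearOrder K]
    [IsStrictOrderedRing K] {p q s u : K} (hp : 0 < p) (hq : 0 < q) (hs : 0 < s)
    (hpq : p ≠ q) (h : p + u = q + s) :
    0 < (p / q - 1) * (p / q - p * u / (q * s)) := by
  have hu : u = q + s - p := by linear_combination h
  have key : (p / q - 1) * (p / q - p * u / (q * s)) = p * (p - q) ^ 2 / (q ^ 2 * s) := by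
    rw [hu]; field_simp; ring
  rw [key]
  have : 0 < (p - q) ^ 2 := by positivity [sub_ne_zero.mpr hpq]
  positivity

theorem mem_Ioo_min_union_Ioi_max {K : Type*} [Field K] [LinearOrder K] [IsStrictOrderedRing K]
    {a b r : K} (hr : 0 < r) (h : 0 < (r - a) * (r - b)) :
    r ∈ Set.Ioo 0 (min a b) ∪ Set.Ioi (max a b) := by
  rcases mul_pos_iff.mp h with ⟨ha, hb⟩ | ⟨ha, hb⟩
  · exact Or.inr (max_lt (by linarith) (by linarith))
  · exact Or.inl ⟨hr, lt_min (by linarith) (by linarith)⟩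

theorem amplitude_inequality (α β γ δ : ℝ)
    (hα : α ∈ Set.Ioo 0 Real.pi) (hβ : β ∈ Set.Ioo 0 Real.pi)
    (hγ : γ ∈ Set.Ioo 0 Real.pi) (hδ : δ ∈ Set.Ioo 0 Real.pi)
    (hell : Elliptic α β γ δ)
    (σ : ℝ) (hσ : σ = (α + β + γ + δ) / 2)
    (M : ℝ)
    (hMdef : M = (Real.sin α * Real.sin β * Real.sin γ * Real.sin δ) /
        (Real.sin (σ - α) * Real.sin (σ - β) * Real.sin (σ - γ) * Real.sin (σ - δ)))
    (hM : M > 0)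
    (r : ℝ)
    (hrdef : r = (Real.sin α * Real.sin δ) / (Real.sin (σ - α) * Real.sin (σ - δ))) :
    r > 0 ∧ (r - 1) * (r - M) > 0 ∧
      r ∈ Set.Ioo 0 (min 1 M) ∪ Set.Ioi (max 1 M) := by
  have hPQ := sin_mul_sin_sub_sin_mul_sin hσ
  have hRS := sin_mul_sin_sub_sin_mul_sin (α := β) (β := α) (γ := δ) (δ := γ) (σ := σ)
    (by rw [hσ]; ring)
  rw [show (β - α - δ + γ) / 2 = -((α - β - γ + δ) / 2) by ring, sin_neg] at hRS
  set P := sin α * sin δ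
  set Q := sin (σ - α) * sin (σ - δ)
  set R := sin β * sin γ
  set S := sin (σ - β) * sin (σ - γ)
  have hP : 0 < P := mul_pos (sin_pos_of_pos_of_lt_pi hα.1 hα.2) (sin_pos_of_pos_of_lt_pi hδ.1 hδ.2)
  have hR : 0 < R := mul_pos (sin_pos_of_pos_of_lt_pi hβ.1 hβ.2) (sin_pos_of_pos_of_lt_pi hγ.1 hγ.2)
  have hM' : M = P * R / (Q * S) := by rw [hMdef]; ring
  have hQS : 0 < Q * S := (div_pos_iff_of_pos_left (mul_pos hP hR)).mp (hM' ▸ hM)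
  obtain ⟨hQ, hS⟩ := pos_and_pos_of_add_pos_of_mul_pos (by linarith) hQS
  have hPneQ : P ≠ Q := by
    rw [← sub_ne_zero, hPQ]
    exact mul_ne_zero (hell.sin_ne_zero (.inl rfl) (.inl rfl) (.inl rfl) (by rw [hσ]; ring))
      (hell.sin_ne_zero (.inr rfl) (.inr rfl) (.inl rfl) (by ring))
  have hr : 0 < r := hrdef ▸ div_pos hP hQ
  have hprod : 0 < (r - 1) * (r - M) := by
    rw [hrdef, hM']
    exact div_sub_one_mul_div_sub_div_pos hP hQ hS hPneQ (by linarith)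
  exact ⟨hr, hprod, mem_Ioo_min_union_Ioi_max hr hprod⟩
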